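/- For k ≥ 4, let ℓ be the greatest odd integer at most (√(8k−7)+1)/2, and let G be the graph formed by two disjoint copies H_1, H_2 of K_ℓ together with a perfect matching joining corresponding vertices. Let S = E(H_1) ∪ {e} for an arbitrary edge e of H_2. Then |S| ≤ k, S contains no odd edge cut of G, and no circuit of G contains all edges of S. -/

import Mathlib

open SimpleGraph

/-- The edge boundary (cut) `∂A` of a vertex set `A` in a graph `G`. -/
def edgeCut {V : Type*} (G : SimpleGraph V) (A : Set V) : Set (Sym2 V) :=
  {e | ∃ u v, G.Adj u v ∧ u ∈ A ∧ v ∉ A ∧ e = s(u, v)}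

/-- Two disjoint copies of `K_ℓ` joined by a perfect matching between corresponding
vertices. -/
def twoCliques (ℓ : ℕ) : SimpleGraph (Fin 2 × Fin ℓ) :=
  SimpleGraph.fromRel fun p q => (p.1 = q.1 ∧ p.2 ≠ q.2) ∨ (p.1 ≠ q.1 ∧ p.2 = q.2)

/-- The edge set `S = E(H_1) ∪ {e}`: all edges of the first clique together with one
edge `e = v_{2,x₀} v_{2,y₀}` of the second clique. -/
def cliqueEdges (ℓ : ℕ) (x₀ y₀ : Fin ℓ) : Set (Sym2 (Fin 2 × Fin ℓ)) :=
  {f | ∃ u v : Fin ℓ, u ≠ v ∧ f = s(((0 : Fin 2), u), ((0 : Fin 2), v))} ∪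
    {s(((1 : Fin 2), x₀), ((1 : Fin 2), y₀))}

/-!
No matching edge lies in `S`, so a cut `∂A ⊆ S` has `A` invariant under swapping the two
copies; the swap is then a fixed-point-free involution of `∂A`, hence `|∂A|` is even.
A circuit through `E(H₁)` uses the `ℓ - 1` clique edges at every vertex of `H₁`; that vertex
has odd degree `ℓ` and a circuit meets each vertex in an even number of edges, so no matching
edge is used. The circuit then stays in one copy, yet contains edges of both `H₁` and `H₂`.
Finally `|S| ≤ C(ℓ, 2) + 1 ≤ k` amounts to `(2ℓ - 1)² ≤ 8k - 7`.
-/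

theorem Set.even_ncard_of_involution {α : Type*} {s : Set α} (hs : s.Finite) (f : α → α)
    (hmem : ∀ a ∈ s, f a ∈ s) (hinv : ∀ a ∈ s, f (f a) = a) (hne : ∀ a ∈ s, f a ≠ a) :
    Even s.ncard := by
  rw [← ZMod.natCast_eq_zero_iff_even, Set.ncard_eq_toFinset_card s hs, Finset.card_eq_sum_ones,
    Nat.cast_sum]
  exact Finset.sum_involution (fun a _ => f a) (fun _ _ => by decide)
    (fun a ha _ => hne a (hs.mem_toFinset.1 ha))
    (fun a ha => hs.mem_toFinset.2 (hmem a (hs.mem_toFinset.1 ha)))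
    (fun a ha => hinv a (hs.mem_toFinset.1 ha))

theorem even_ncard_edgeCut_of_involutive {V : Type*} [Finite V] {G : SimpleGraph V}
    (f : G →g G) (hf : Function.Involutive f) (hfix : ∀ v, f v ≠ v) {A : Set V}
    (hA : ∀ v, f v ∈ A ↔ v ∈ A) : Even (edgeCut G A).ncard := by
  refine Set.even_ncard_of_involution (Set.toFinite _) (Sym2.map f) ?_ ?_ ?_
  · rintro _ ⟨u, v, huv, hu, hv, rfl⟩
    exact ⟨f u, f v, f.map_adj huv, (hA u).2 hu, mt (hA v).1 hv, Sym2.map_mk ..⟩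
  · intro e _
    rw [Sym2.map_map, hf.comp_self, Sym2.map_id, id]
  · rintro _ ⟨u, v, -, hu, hv, rfl⟩ h
    rw [Sym2.map_mk, Sym2.eq_iff] at h
    rcases h with ⟨h, -⟩ | ⟨h, -⟩
    · exact hfix u h
    · exact hv (h ▸ (hA u).2 hu)

theorem SimpleGraph.Walk.IsTrail.exists_mem_incidenceSet_notMem_edges {V : Type*}
    [DecidableEq V] {G : SimpleGraph V} {u v : V} {c : G.Walk u u} (hc : c.IsTrail)
    [Fintype (G.neighborSet v)] (hv : Odd (G.degree v)) :
    ∃ e ∈ G.incidenceSet v, e ∉ c.edges := by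
  by_contra! h
  have hcount : c.edges.countP (v ∈ ·) = G.degree v := by
    rw [← card_incidenceFinset_eq_degree, List.countP_eq_length_filter,
      ← List.toFinset_card_of_nodup (hc.edges_nodup.filter _)]
    congr 1
    ext e
    simp only [List.mem_toFinset, List.mem_filter, decide_eq_true_eq, mem_incidenceFinset]
    exact ⟨fun ⟨he, hve⟩ => ⟨c.edges_subset_edgeSet he, hve⟩, fun he => ⟨h e he, he.2⟩⟩
  have heven := (hc.even_countP_edges_iff v).2 (fun h => absurd rfl h)
  rw [hcount] at heven
  exact Nat.not_even_iff_odd.2 hv heven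

theorem SimpleGraph.Walk.exists_edges_subset_of_mem_support {V : Type*} [DecidableEq V]
    {G : SimpleGraph V} {x y u v : V} (c : G.Walk x y) (hu : u ∈ c.support)
    (hv : v ∈ c.support) : ∃ p : G.Walk u v, p.edges ⊆ c.edges := by
  refine ⟨(c.takeUntil u hu).reverse.append (c.takeUntil v hv), fun e he => ?_⟩
  rw [edges_append, edges_reverse, List.mem_append, List.mem_reverse] at he
  exact he.elim (fun h => c.edges_takeUntil_subset_edges hu h)
    (fun h => c.edges_takeUntil_subset_edges hv h)

theorem twoCliques_eq_boxProd (ℓ : ℕ) :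
    twoCliques ℓ = (⊤ : SimpleGraph (Fin 2)) □ (⊤ : SimpleGraph (Fin ℓ)) := by
  ext p q
  simp only [twoCliques, fromRel_adj, boxProd_adj, top_adj, ne_eq, Prod.ext_iff]
  grind

theorem twoCliques_adj {ℓ : ℕ} {p q : Fin 2 × Fin ℓ} :
    (twoCliques ℓ).Adj p q ↔ p.1 ≠ q.1 ∧ p.2 = q.2 ∨ p.2 ≠ q.2 ∧ p.1 = q.1 := by
  rw [twoCliques_eq_boxProd, boxProd_adj, top_adj, top_adj]

theorem twoCliques_degree {ℓ : ℕ} (p : Fin 2 × Fin ℓ) [Fintype ((twoCliques ℓ).neighborSet p)] :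
    (twoCliques ℓ).degree p = ℓ := by
  classical
  convert degree_boxProd (G := (⊤ : SimpleGraph (Fin 2))) (H := (⊤ : SimpleGraph (Fin ℓ))) p
  · exact twoCliques_eq_boxProd ℓ
  · have := p.2.pos
    simp only [← completeGraph_eq_top, complete_graph_degree, Fintype.card_fin]
    omega

def swapCopies (ℓ : ℕ) : twoCliques ℓ →g twoCliques ℓ where
  toFun p := (p.1.rev, p.2)
  map_rel' := by
    intro p q h
    rw [twoCliques_adj] at h ⊢
    simpa only [ne_eq, Fin.rev_inj] using h

theorem swapCopies_involutive (ℓ : ℕ) : Function.Involutive (swapCopies ℓ) :=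
  fun p => Prod.ext p.1.rev_rev rfl

theorem swapCopies_fst_ne {ℓ : ℕ} (p : Fin 2 × Fin ℓ) : (swapCopies ℓ p).1 ≠ p.1 := by
  have : ∀ i : Fin 2, i.rev ≠ i := by decide
  exact this p.1

theorem adj_swapCopies {ℓ : ℕ} (p : Fin 2 × Fin ℓ) : (twoCliques ℓ).Adj p (swapCopies ℓ p) :=
  twoCliques_adj.2 (Or.inl ⟨(swapCopies_fst_ne p).symm, rfl⟩)

theorem fst_eq_of_mk_mem_cliqueEdges {ℓ : ℕ} {x₀ y₀ : Fin ℓ} {p q : Fin 2 × Fin ℓ}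
    (h : s(p, q) ∈ cliqueEdges ℓ x₀ y₀) : p.1 = q.1 := by
  rcases h with ⟨u, v, -, h⟩ | h
  · rcases Sym2.eq_iff.1 h with ⟨rfl, rfl⟩ | ⟨rfl, rfl⟩ <;> rfl
  · rcases Sym2.eq_iff.1 h with ⟨rfl, rfl⟩ | ⟨rfl, rfl⟩ <;> rfl

theorem swapCopies_mem_iff_of_edgeCut_subset {ℓ : ℕ} {x₀ y₀ : Fin ℓ} {A : Set (Fin 2 × Fin ℓ)}
    (hA : edgeCut (twoCliques ℓ) A ⊆ cliqueEdges ℓ x₀ y₀) (p : Fin 2 × Fin ℓ) :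
    swapCopies ℓ p ∈ A ↔ p ∈ A := by
  have key : ∀ p, p ∈ A → swapCopies ℓ p ∈ A := fun p hp => by
    by_contra h
    exact swapCopies_fst_ne p
      (fst_eq_of_mk_mem_cliqueEdges (hA ⟨p, _, adj_swapCopies p, hp, h, rfl⟩)).symm
  exact ⟨fun h => swapCopies_involutive ℓ p ▸ key _ h, key p⟩

def matchingEdge {ℓ : ℕ} (j : Fin ℓ) : Sym2 (Fin 2 × Fin ℓ) :=
  s(((0 : Fin 2), j), ((1 : Fin 2), j))

theorem mk_eq_matchingEdge {ℓ : ℕ} {p q : Fin 2 × Fin ℓ} (h1 : p.1 ≠ q.1) (h2 : p.2 = q.2) :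
    s(p, q) = matchingEdge p.2 := by
  obtain ⟨a, i⟩ := p
  obtain ⟨b, j⟩ := q
  dsimp only at h1 h2 ⊢
  subst h2
  fin_cases a <;> fin_cases b <;> simp_all [matchingEdge, Sym2.eq_swap]

theorem exists_matchingEdge_mem_edges {ℓ : ℕ} {u v : Fin 2 × Fin ℓ} (p : (twoCliques ℓ).Walk u v)
    (huv : u.1 ≠ v.1) : ∃ j : Fin ℓ, matchingEdge j ∈ p.edges := by
  obtain ⟨d, hd, hfst, hsnd⟩ := p.exists_boundary_dart {w | w.1 = u.1} rfl huv.symm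
  have hcross : d.fst.1 ≠ d.snd.1 := fun h => hsnd (h.symm.trans hfst)
  obtain ⟨-, hmatch⟩ | ⟨-, h⟩ := twoCliques_adj.1 d.adj
  · exact ⟨d.fst.2, mk_eq_matchingEdge hcross hmatch ▸ List.mem_map_of_mem hd⟩
  · exact absurd h hcross

theorem matchingEdge_notMem_edges {ℓ : ℕ} (hℓ : Odd ℓ) {x : Fin 2 × Fin ℓ}
    {c : (twoCliques ℓ).Walk x x} (hc : c.IsTrail)
    (hH₁ : ∀ u v : Fin ℓ, u ≠ v → s(((0 : Fin 2), u), ((0 : Fin 2), v)) ∈ c.edges) (j : Fin ℓ) :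
    matchingEdge j ∉ c.edges := by
  classical
  obtain ⟨e, ⟨he, hje⟩, hec⟩ :=
    hc.exists_mem_incidenceSet_notMem_edges (v := ((0 : Fin 2), j)) (by rwa [twoCliques_degree])
  obtain ⟨⟨a, i⟩, rfl⟩ := Sym2.mem_iff_exists.1 hje
  rw [mem_edgeSet, twoCliques_adj] at he
  obtain ⟨ha, rfl⟩ | ⟨hi, rfl⟩ := he
  · rwa [mk_eq_matchingEdge ha rfl] at hec
  · exact absurd (hH₁ j i hi) hec

theorem ncard_cliqueEdges_le {ℓ : ℕ} (x₀ y₀ : Fin ℓ) :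
    (cliqueEdges ℓ x₀ y₀).ncard ≤ ℓ.choose 2 + 1 := by
  classical
  have hH₁ : {f | ∃ u v : Fin ℓ, u ≠ v ∧ f = s(((0 : Fin 2), u), ((0 : Fin 2), v))} =
      Sym2.map (fun v => ((0 : Fin 2), v)) '' (⊤ : SimpleGraph (Fin ℓ)).edgeSet := by
    ext f
    constructor
    · rintro ⟨u, v, huv, rfl⟩
      exact ⟨s(u, v), huv, rfl⟩
    · rintro ⟨z, hz, rfl⟩
      induction z using Sym2.ind with
      | _ u v => exact ⟨u, v, hz, rfl⟩
  calc (cliqueEdges ℓ x₀ y₀).ncard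
      ≤ {f | ∃ u v : Fin ℓ, u ≠ v ∧ f = s(((0 : Fin 2), u), ((0 : Fin 2), v))}.ncard + 1 :=
        (Set.ncard_union_le _ _).trans_eq (by rw [Set.ncard_singleton])
    _ = ℓ.choose 2 + 1 := by
        rw [hH₁, Set.ncard_image_of_injective _ (Sym2.map.injective (Prod.mk_right_injective 0)),
          ← coe_edgeFinset, Set.ncard_coe_finset, card_edgeFinset_top_eq_card_choose_two,
          Fintype.card_fin]

theorem choose_two_add_one_le {k ℓ : ℕ} (hℓ : 1 ≤ ℓ)
    (hle : (ℓ : ℝ) ≤ (Real.sqrt (8 * (k : ℝ) - 7) + 1) / 2) : ℓ.choose 2 + 1 ≤ k := by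
  have hpos : (0 : ℝ) < 2 * ℓ - 1 := by
    have : (1 : ℝ) ≤ ℓ := by exact_mod_cast hℓ
    linarith
  have hsq : (2 * (ℓ : ℝ) - 1) ^ 2 ≤ 8 * k - 7 := (Real.le_sqrt' hpos).1 (by linarith)
  have : ((ℓ.choose 2 + 1 : ℕ) : ℝ) ≤ k := by
    push_cast [Nat.cast_choose_two]
    nlinarith
  exact_mod_cast this

theorem stmt14_general (k ℓ : ℕ) (hodd : Odd ℓ)
    (hle : (ℓ : ℝ) ≤ (Real.sqrt (8 * (k : ℝ) - 7) + 1) / 2)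
    (x₀ y₀ : Fin ℓ) (hxy : x₀ ≠ y₀) :
    (cliqueEdges ℓ x₀ y₀).ncard ≤ k ∧
    (¬ ∃ A : Set (Fin 2 × Fin ℓ), edgeCut (twoCliques ℓ) A ⊆ cliqueEdges ℓ x₀ y₀ ∧
        Odd (edgeCut (twoCliques ℓ) A).ncard) ∧
    ¬ ∃ (x : Fin 2 × Fin ℓ) (c : (twoCliques ℓ).Walk x x), c.IsCircuit ∧
        ∀ f ∈ cliqueEdges ℓ x₀ y₀, f ∈ c.edges := by
  refine ⟨(ncard_cliqueEdges_le x₀ y₀).trans (choose_two_add_one_le x₀.pos hle), ?_, ?_⟩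
  · rintro ⟨A, hA, hodd_cut⟩
    exact Nat.not_even_iff_odd.2 hodd_cut <| even_ncard_edgeCut_of_involutive (swapCopies ℓ)
      (swapCopies_involutive ℓ) (fun p h => swapCopies_fst_ne p (congrArg Prod.fst h))
      (swapCopies_mem_iff_of_edgeCut_subset hA)
  · rintro ⟨x, c, hc, hS⟩
    have hH₁ : ∀ u v : Fin ℓ, u ≠ v → s(((0 : Fin 2), u), ((0 : Fin 2), v)) ∈ c.edges :=
      fun u v huv => hS _ (Or.inl ⟨u, v, huv, rfl⟩)
    have h₀ := c.fst_mem_support_of_mem_edges (hH₁ x₀ y₀ hxy)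
    have h₁ := c.fst_mem_support_of_mem_edges (hS _ (Or.inr rfl))
    classical
    obtain ⟨p, hp⟩ := c.exists_edges_subset_of_mem_support h₀ h₁
    obtain ⟨j, hj⟩ := exists_matchingEdge_mem_edges p Fin.zero_ne_one
    exact matchingEdge_notMem_edges hodd hc.isTrail hH₁ j (hp hj)

/-- The witness for `g(k) > ℓ`: for `k ≥ 4` and `ℓ` the greatest odd integer at most
`(√(8k-7)+1)/2`, in the graph of two `K_ℓ`'s joined by a matching, the set
`S = E(H_1) ∪ {e}` has at most `k` edges, contains no odd cut, but lies on no circuit. -/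
theorem stmt14 (k ℓ : ℕ) (hk : 4 ≤ k) (hodd : Odd ℓ)
    (hle : (ℓ : ℝ) ≤ (Real.sqrt (8 * (k : ℝ) - 7) + 1) / 2)
    (hmax : ∀ m : ℕ, Odd m → (m : ℝ) ≤ (Real.sqrt (8 * (k : ℝ) - 7) + 1) / 2 → m ≤ ℓ)
    (x₀ y₀ : Fin ℓ) (hxy : x₀ ≠ y₀) :
    (cliqueEdges ℓ x₀ y₀).ncard ≤ k ∧
    (¬ ∃ A : Set (Fin 2 × Fin ℓ), edgeCut (twoCliques ℓ) A ⊆ cliqueEdges ℓ x₀ y₀ ∧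
        Odd (edgeCut (twoCliques ℓ) A).ncard) ∧
    ¬ ∃ (x : Fin 2 × Fin ℓ) (c : (twoCliques ℓ).Walk x x), c.IsCircuit ∧
        ∀ f ∈ cliqueEdges ℓ x₀ y₀, f ∈ c.edges :=
  stmt14_general k ℓ hodd hle x₀ y₀ hxy
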